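/- arXiv:1506.05451 — 3 statements merged into one kernel-verified Lean document; each statement's English description precedes it below -/
import Mathlib

section
/- Let f be an unbounded modulus, λ ∈ Λ, and (x_t) a bounded real sequence that is f_λ-statistically convergent to L. Then (x_t) is strongly λ-summable to L, i.e. lim_n (1/λ_n) Σ_{t∈I_n} |x_t − L| = 0. -/
open Filter Finset Topology
open scoped Classical

def IsModulus (f : ℝ → ℝ) : Prop :=
  (∀ x, 0 ≤ x → 0 ≤ f x) ∧
  (∀ x, 0 ≤ x → (f x = 0 ↔ x = 0)) ∧
  (∀ x, 0 ≤ x → ∀ y, 0 ≤ y → f (x + y) ≤ f x + f y) ∧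
  (∀ x y, 0 ≤ x → x ≤ y → f x ≤ f y) ∧
  ContinuousWithinAt f (Set.Ici 0) 0

def IsUnboundedModulus (f : ℝ → ℝ) : Prop :=
  IsModulus f ∧ ∀ M : ℝ, ∃ x, 0 ≤ x ∧ M < f x

def MemLambda (l : ℕ → ℝ) : Prop :=
  l 1 = 1 ∧ Monotone l ∧ (∀ n, l (n + 1) ≤ l n + 1) ∧ (∀ n, 0 < l n) ∧
  Tendsto l atTop atTop

noncomputable def Iseg (l : ℕ → ℝ) (n : ℕ) : Finset ℕ :=
  (Finset.Icc 1 n).filter (fun t => (n : ℝ) - l n + 1 ≤ (t : ℝ))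

def FLStatConv {X : Type*} [NormedAddCommGroup X] (f : ℝ → ℝ) (l : ℕ → ℝ)
    (x : ℕ → X) (L : X) : Prop :=
  ∀ ξ : ℝ, 0 < ξ →
    Tendsto (fun n => f (((Iseg l n).filter (fun t => ξ ≤ ‖x t - L‖)).card) / f (l n))
      atTop (nhds 0)

def FLDensityZero (f : ℝ → ℝ) (l : ℕ → ℝ) (T : Set ℕ) : Prop :=
  Tendsto (fun n => f (((Iseg l n).filter (fun t => t ∈ T)).card) / f (l n))
    atTop (nhds 0)

def FStatConv {X : Type*} [NormedAddCommGroup X] (f : ℝ → ℝ)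
    (x : ℕ → X) (L : X) : Prop :=
  ∀ ξ : ℝ, 0 < ξ →
    Tendsto (fun u => f (((Finset.Icc 1 u).filter (fun t => ξ ≤ ‖x t - L‖)).card) / f (u : ℝ))
      atTop (nhds 0)

/-! Subadditivity and monotonicity give `f b ≤ ⌈ε⁻¹⌉ * f a` whenever `ε * b ≤ a`, so
`f (a n) / f (b n) → 0` forces `a n / b n → 0`: `f_λ`-statistical convergence implies
`λ`-statistical convergence. For a bounded sequence, the sum over `I_n` then splits into the terms
with `|x_t - L| ≥ ξ`, whose total is at most the bound times their (asymptotically negligible)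
number, and the others, whose total is at most `ξ * |I_n| ≤ ξ * λ_n`. -/

namespace IsModulus

variable {f : ℝ → ℝ}

lemma map_zero (hf : IsModulus f) : f 0 = 0 := (hf.2.1 0 le_rfl).mpr rfl

lemma map_pos (hf : IsModulus f) {x : ℝ} (hx : 0 < x) : 0 < f x :=
  (hf.1 x hx.le).lt_of_ne fun h => hx.ne' ((hf.2.1 x hx.le).mp h.symm)

lemma map_natCast_mul_le (hf : IsModulus f) {y : ℝ} (hy : 0 ≤ y) (k : ℕ) :
    f (k * y) ≤ k * f y := by
  induction k with
  | zero => simp [hf.map_zero]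
  | succ k ih =>
    calc f ((k + 1 : ℕ) * y) = f (k * y + y) := by push_cast; ring_nf
      _ ≤ f (k * y) + f y := hf.2.2.1 _ (by positivity) _ hy
      _ ≤ (k + 1 : ℕ) * f y := by push_cast; linarith

lemma map_le_ceil_inv_mul_map (hf : IsModulus f) {ε a b : ℝ} (hε : 0 < ε) (hb : 0 ≤ b)
    (hab : ε * b ≤ a) :
    f b ≤ ⌈ε⁻¹⌉₊ * f a := by
  have hεb : 0 ≤ ε * b := by positivity
  have hk : 1 ≤ (⌈ε⁻¹⌉₊ : ℝ) * ε := by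
    rw [← inv_mul_cancel₀ hε.ne']
    exact mul_le_mul_of_nonneg_right (Nat.le_ceil _) hε.le
  calc f b ≤ f (⌈ε⁻¹⌉₊ * (ε * b)) := hf.2.2.2.1 _ _ hb (by nlinarith)
    _ ≤ ⌈ε⁻¹⌉₊ * f (ε * b) := hf.map_natCast_mul_le hεb _
    _ ≤ ⌈ε⁻¹⌉₊ * f a := by gcongr; exact hf.2.2.2.1 _ _ hεb hab

lemma tendsto_div_of_tendsto_map_div (hf : IsModulus f) {α : Type*} {F : Filter α}
    {a b : α → ℝ} (ha : ∀ i, 0 ≤ a i) (hb : ∀ i, 0 < b i)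
    (h : Tendsto (fun i => f (a i) / f (b i)) F (𝓝 0)) :
    Tendsto (fun i => a i / b i) F (𝓝 0) := by
  refine tendsto_order.2 ⟨fun c hc => Eventually.of_forall fun i =>
    hc.trans_le (div_nonneg (ha i) (hb i).le), fun ε hε => ?_⟩
  have hk : (0 : ℝ) < ⌈ε⁻¹⌉₊ := by positivity
  filter_upwards [h.eventually (gt_mem_nhds (inv_pos.2 hk))] with i hi
  by_contra! hle
  have hfb := hf.map_pos (hb i)
  have key := hf.map_le_ceil_inv_mul_map hε (hb i).le ((le_div_iff₀ (hb i)).1 hle)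
  rw [div_lt_iff₀ hfb] at hi
  nlinarith [inv_mul_cancel₀ hk.ne']

end IsModulus

lemma card_Iseg_le {l : ℕ → ℝ} {n : ℕ} (hl : 0 ≤ l n) : ((Iseg l n).card : ℝ) ≤ l n := by
  have hmaps : Set.MapsTo (fun t => n - t) (Iseg l n) (range ⌊l n⌋₊) := by
    intro t ht
    simp only [Iseg, coe_filter, mem_Icc, Set.mem_ofPred_eq] at ht
    have : ((n - t + 1 : ℕ) : ℝ) ≤ l n := by push_cast [ht.1.2]; linarith [ht.2]
    simpa using Nat.le_floor this
  have hinj : Set.InjOn (fun t => n - t) (Iseg l n) := by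
    intro s hs t ht hst
    simp only [Iseg, coe_filter, mem_Icc, Set.mem_ofPred_eq] at hs ht
    simp only at hst
    omega
  calc ((Iseg l n).card : ℝ) ≤ ⌊l n⌋₊ := by
        exact_mod_cast card_range ⌊l n⌋₊ ▸ card_le_card_of_injOn _ hmaps hinj
    _ ≤ l n := Nat.floor_le hl

lemma sum_le_mul_card_filter_add_mul_card {ι : Type*} (s : Finset ι) (g : ι → ℝ) {K ξ : ℝ}
    (hξ : 0 ≤ ξ) (hK : ∀ t ∈ s, g t ≤ K) :
    ∑ t ∈ s, g t ≤ K * #(s.filter fun t => ξ ≤ g t) + ξ * #s := by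
  rw [← sum_filter_add_sum_filter_not s fun t => ξ ≤ g t]
  have hlarge : ∑ t ∈ s.filter (fun t => ξ ≤ g t), g t ≤ #(s.filter fun t => ξ ≤ g t) • K :=
    sum_le_card_nsmul _ _ _ fun t ht => hK t (mem_filter.1 ht).1
  have hsmall : ∑ t ∈ s.filter (fun t => ¬ξ ≤ g t), g t ≤ #(s.filter fun t => ¬ξ ≤ g t) • ξ :=
    sum_le_card_nsmul _ _ _ fun t ht => (not_le.1 (mem_filter.1 ht).2).le
  have hcard : (#(s.filter fun t => ¬ξ ≤ g t) : ℝ) ≤ #s := by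
    exact_mod_cast card_filter_le _ _
  rw [nsmul_eq_mul] at hlarge hsmall
  nlinarith

lemma tendsto_zero_of_forall_pos_le_add {α : Type*} {F : Filter α} {u : α → ℝ}
    (hu : ∀ i, 0 ≤ u i)
    (h : ∀ ξ > 0, ∃ v : α → ℝ, Tendsto v F (𝓝 0) ∧ ∀ i, u i ≤ v i + ξ) :
    Tendsto u F (𝓝 0) := by
  refine tendsto_order.2 ⟨fun c hc => Eventually.of_forall fun i => hc.trans_le (hu i),
    fun ε hε => ?_⟩
  obtain ⟨v, hv, huv⟩ := h (ε / 2) (half_pos hε)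
  filter_upwards [hv.eventually (gt_mem_nhds (half_pos hε))] with i hi
  linarith [huv i]

theorem stmt3 (f : ℝ → ℝ) (hf : IsUnboundedModulus f)
    (l : ℕ → ℝ) (hl : MemLambda l) (x : ℕ → ℝ) (L : ℝ)
    (hbdd : ∃ M : ℝ, ∀ t, |x t| ≤ M)
    (hconv : FLStatConv f l x L) :
    Tendsto (fun n => (1 / l n) * ∑ t ∈ Iseg l n, |x t - L|) atTop (nhds 0) := by
  obtain ⟨M, hM⟩ := hbdd
  have hl_pos : ∀ n, 0 < l n := hl.2.2.2.1
  have hK : ∀ t, ‖x t - L‖ ≤ M + |L| := fun t => (norm_sub_le _ _).trans (by simpa using hM t)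
  simp only [← Real.norm_eq_abs]
  refine tendsto_zero_of_forall_pos_le_add (fun n => ?_) fun ξ hξ =>
    ⟨fun n => (M + |L|) * (#((Iseg l n).filter fun t => ξ ≤ ‖x t - L‖) / l n), ?_, fun n => ?_⟩
  · exact mul_nonneg (one_div_nonneg.2 (hl_pos n).le) (sum_nonneg fun _ _ => norm_nonneg _)
  · simpa using (hf.1.tendsto_div_of_tendsto_map_div (fun _ => Nat.cast_nonneg _) hl_pos
      (hconv ξ hξ)).const_mul (M + |L|)
  · have hsum := sum_le_mul_card_filter_add_mul_card (Iseg l n) (fun t => ‖x t - L‖) hξ.le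
      fun t _ => hK t
    have hcard := card_Iseg_le (hl_pos n).le
    dsimp only
    rw [one_div_mul_eq_div, div_le_iff₀ (hl_pos n), add_mul, ← mul_div_assoc,
      div_mul_cancel₀ _ (hl_pos n).ne']
    exact hsum.trans (by gcongr)
end

section
/- Let f be an unbounded modulus, λ ∈ Λ, X a normed space. Every f_λ-statistically convergent sequence in X is f_λ-statistically Cauchy. -/
open Filter Finset Topology
open scoped Classical

/-!
Pick `Q` with `‖xs Q - x‖ < ξ / 2`; such a `Q` exists because the whole sequence of windows
`Iseg l n` has `f_λ`-density one, so a density-zero set cannot contain every index. By the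
triangle inequality `{t | ξ ≤ ‖xs t - xs Q‖} ⊆ {t | ξ / 2 ≤ ‖xs t - x‖}`, and subsets of
density-zero sets have density zero since `f` is monotone.
-/

namespace MemLambda

variable {l : ℕ → ℝ}

theorem le_natCast (hl : MemLambda l) {n : ℕ} (hn : 1 ≤ n) : l n ≤ n := by
  induction n, hn using Nat.le_induction with
  | base => simp [hl.1]
  | succ m _ ih =>
    push_cast
    linarith [hl.2.2.1 m]

theorem le_card_Iseg_add_one (hl : MemLambda l) {n : ℕ} (hn : 1 ≤ n) :
    l n ≤ (Iseg l n).card + 1 := by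
  set k := ⌊l n⌋₊
  have hkn : k ≤ n := Nat.floor_le_of_le (hl.le_natCast hn)
  have hsub : Finset.Ioc (n - k) n ⊆ Iseg l n := by
    intro t ht
    rw [Finset.mem_Ioc] at ht
    have htk : (n : ℝ) + 1 ≤ t + k := by exact_mod_cast (by omega : n + 1 ≤ t + k)
    have hkl : (k : ℝ) ≤ l n := Nat.floor_le (hl.2.2.2.1 n).le
    simp only [Iseg, Finset.mem_filter, Finset.mem_Icc]
    exact ⟨⟨by omega, ht.2⟩, by linarith⟩
  have hk : k ≤ (Iseg l n).card := by
    simpa [Nat.card_Ioc, Nat.sub_sub_self hkn] using Finset.card_le_card hsub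
  calc l n ≤ k + 1 := (Nat.lt_floor_add_one _).le
    _ ≤ (Iseg l n).card + 1 := by gcongr

end MemLambda

theorem IsModulus.pos {f : ℝ → ℝ} (hf : IsModulus f) {x : ℝ} (hx : 0 < x) : 0 < f x :=
  (hf.1 x hx.le).lt_of_ne fun h => hx.ne' ((hf.2.1 x hx.le).1 h.symm)

theorem IsUnboundedModulus.tendsto_atTop {f : ℝ → ℝ} (hf : IsUnboundedModulus f) :
    Tendsto f atTop atTop := by
  rw [Filter.tendsto_atTop]
  intro M
  obtain ⟨x₀, hx₀, hM⟩ := hf.2 M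
  filter_upwards [eventually_ge_atTop x₀] with y hy
  exact hM.le.trans (hf.1.2.2.2.1 x₀ y hx₀ hy)

namespace FLDensityZero

variable {f : ℝ → ℝ} {l : ℕ → ℝ}

theorem mono (hf : IsModulus f) (hl : ∀ n, 0 ≤ l n) {S T : Set ℕ} (hST : S ⊆ T)
    (hT : FLDensityZero f l T) : FLDensityZero f l S := by
  refine tendsto_of_tendsto_of_tendsto_of_le_of_le tendsto_const_nhds hT
    (fun n => div_nonneg (hf.1 _ (Nat.cast_nonneg _)) (hf.1 _ (hl n)))
    (fun n => div_le_div_of_nonneg_right ?_ (hf.1 _ (hl n)))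
  exact hf.2.2.2.1 _ _ (Nat.cast_nonneg _)
    (by exact_mod_cast Finset.card_le_card (Finset.monotone_filter_right _ fun t _ ht => hST ht))

theorem not_univ (hf : IsUnboundedModulus f) (hl : MemLambda l) :
    ¬ FLDensityZero f l Set.univ := by
  intro hzero
  simp only [FLDensityZero, Set.mem_univ, Finset.filter_true] at hzero
  have hfl : Tendsto (fun n => f (l n)) atTop atTop := hf.tendsto_atTop.comp hl.2.2.2.2
  have hlower : Tendsto (fun n => 1 - f 1 / f (l n)) atTop (𝓝 1) := by
    simpa using tendsto_const_nhds.sub (hfl.const_div_atTop (f 1))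
  have hbound : ∀ᶠ n in atTop, 1 - f 1 / f (l n) ≤ f (Iseg l n).card / f (l n) := by
    filter_upwards [eventually_ge_atTop 1] with n hn
    have hfln := hf.1.pos (hl.2.2.2.1 n)
    have hsub : f (l n) ≤ f (Iseg l n).card + f 1 :=
      (hf.1.2.2.2.1 _ _ (hl.2.2.2.1 n).le (hl.le_card_Iseg_add_one hn)).trans
        (hf.1.2.2.1 _ (Nat.cast_nonneg _) 1 zero_le_one)
    rw [one_sub_div hfln.ne']
    gcongr
    linarith
  linarith [le_of_tendsto_of_tendsto hlower hzero hbound]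

theorem exists_notMem (hf : IsUnboundedModulus f) (hl : MemLambda l) {T : Set ℕ}
    (hT : FLDensityZero f l T) : ∃ t, t ∉ T := by
  by_contra! h
  exact not_univ hf hl (hT.mono hf.1 (fun n => (hl.2.2.2.1 n).le) fun t _ => h t)

end FLDensityZero

theorem FLStatConv.flDensityZero {X : Type*} [NormedAddCommGroup X] {f : ℝ → ℝ} {l : ℕ → ℝ}
    {xs : ℕ → X} {x : X} (h : FLStatConv f l xs x) {ξ : ℝ} (hξ : 0 < ξ) :
    FLDensityZero f l {t | ξ ≤ ‖xs t - x‖} := by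
  simpa only [FLDensityZero, Set.mem_ofPred_eq] using h ξ hξ

theorem stmt9_general {X : Type*} [NormedAddCommGroup X]
    (f : ℝ → ℝ) (hf : IsUnboundedModulus f)
    (l : ℕ → ℝ) (hl : MemLambda l) (xs : ℕ → X) (x : X)
    (hconv : FLStatConv f l xs x) :
    ∀ ξ : ℝ, 0 < ξ → ∃ Q : ℕ, FLDensityZero f l {t | ξ ≤ ‖xs t - xs Q‖} := by
  intro ξ hξ
  have hhalf := hconv.flDensityZero (half_pos hξ)
  obtain ⟨Q, hQ⟩ := hhalf.exists_notMem hf hl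
  simp only [Set.mem_ofPred_eq, not_le] at hQ
  refine ⟨Q, hhalf.mono hf.1 (fun n => (hl.2.2.2.1 n).le) fun t ht => ?_⟩
  have htri := norm_sub_le_norm_sub_add_norm_sub (xs t) x (xs Q)
  rw [norm_sub_rev x] at htri
  exact (by linarith [show ξ ≤ ‖xs t - xs Q‖ from ht] : ξ / 2 ≤ ‖xs t - x‖)

theorem stmt9 {X : Type*} [NormedAddCommGroup X] [NormedSpace ℝ X]
    (f : ℝ → ℝ) (hf : IsUnboundedModulus f)
    (l : ℕ → ℝ) (hl : MemLambda l) (xs : ℕ → X) (x : X)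
    (hconv : FLStatConv f l xs x) :
    ∀ ξ : ℝ, 0 < ξ → ∃ Q : ℕ, FLDensityZero f l {t | ξ ≤ ‖xs t - xs Q‖} :=
  stmt9_general f hf l hl xs x hconv
end

section
/- Let f be an unbounded modulus with lim_{u→∞} f(u)/u > 0 and λ ∈ Λ with lim_n f(n)/f(λ_n) existing and positive. Then every f_λ-statistically convergent real sequence is statistically convergent (with respect to natural density) to the same limit. -/
open Filter Finset Topology
open scoped Classical

/-!
Since `f u / u → p > 0`, eventually `f` lies between two linear functions, so
`f (K n) / f (λ n) → 0` forces `K n = o(λ n)`: `f_λ`-statistical convergence implies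
`λ`-statistical convergence. For the latter, the exceptional indices in `[1, n]` are covered by
those in `[1, n - ⌊λ n⌋]` and those in the window `I n`, which number at most `ε ⌊λ n⌋`.
Iterating this bound down to a fixed threshold `N` gives at most `N + ε n` exceptional indices
in `[1, n]`, hence natural density zero.
-/

lemma le_natCast_of_succ_le_add_one {l : ℕ → ℝ} (h1 : l 1 = 1)
    (hstep : ∀ n, l (n + 1) ≤ l n + 1) {n : ℕ} (hn : 1 ≤ n) : l n ≤ n := by
  induction n, hn using Nat.le_induction with
  | base => simp [h1]
  | succ k _ ih => push_cast; linarith [hstep k]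

lemma eventually_linear_bounds_of_tendsto_div {f : ℝ → ℝ} {p : ℝ} (hp : 0 < p)
    (hfp : Tendsto (fun u => f u / u) atTop (𝓝 p)) :
    ∀ᶠ u in atTop, 0 < u ∧ p / 2 * u ≤ f u ∧ f u ≤ 2 * p * u := by
  filter_upwards [hfp.eventually (Ioo_mem_nhds (half_lt_self hp) (by linarith : p < 2 * p)),
    eventually_gt_atTop 0] with u hu hu₀
  exact ⟨hu₀, ((lt_div_iff₀ hu₀).mp hu.1).le, ((div_lt_iff₀ hu₀).mp hu.2).le⟩

lemma eventually_le_mul_of_tendsto_apply_div_apply {f : ℝ → ℝ} {p : ℝ} (hp : 0 < p)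
    (hfp : Tendsto (fun u => f u / u) atTop (𝓝 p)) {l K : ℕ → ℝ} (hl : Tendsto l atTop atTop)
    (hK : Tendsto (fun n => f (K n) / f (l n)) atTop (𝓝 0)) {ε : ℝ} (hε : 0 < ε) :
    ∀ᶠ n in atTop, K n ≤ ε * l n := by
  obtain ⟨u₀, hu₀⟩ := eventually_atTop.mp (eventually_linear_bounds_of_tendsto_div hp hfp)
  filter_upwards [hK.eventually (eventually_lt_nhds (by positivity : (0 : ℝ) < ε / 4)),
    hl.eventually (eventually_ge_atTop u₀), hl.eventually (eventually_ge_atTop (u₀ / ε))]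
    with n hKl hl₀ hlε
  obtain ⟨hl_pos, hfl_lower, hfl_upper⟩ := hu₀ _ hl₀
  -- `ε / 4` is `ε` times the ratio `(p / 2) / (2 * p)` of the two linear bounds.
  have hfK : f (K n) < ε / 4 * f (l n) := (div_lt_iff₀ (by nlinarith)).mp hKl
  rcases le_or_gt u₀ (K n) with hK₀ | hK₀
  · obtain ⟨-, hfK_lower, -⟩ := hu₀ _ hK₀
    nlinarith
  · linarith [(div_le_iff₀ hε).mp hlε]

lemma Icc_subset_Icc_union_Iseg (l : ℕ → ℝ) (n : ℕ) :
    Icc 1 n ⊆ Icc 1 (n - ⌊l n⌋₊) ∪ Iseg l n := by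
  intro t ht
  rw [Finset.mem_Icc] at ht
  rw [mem_union, Finset.mem_Icc, Iseg, mem_filter, Finset.mem_Icc]
  by_cases htm : t ≤ n - ⌊l n⌋₊
  · exact Or.inl ⟨ht.1, htm⟩
  refine Or.inr ⟨ht, ?_⟩
  have hl : 0 ≤ l n := by
    by_contra! hl
    rw [Nat.floor_of_nonpos hl.le] at htm
    omega
  have hnt : (n : ℝ) + 1 ≤ t + ⌊l n⌋₊ := by exact_mod_cast (by omega : n + 1 ≤ t + ⌊l n⌋₊)
  linarith [Nat.floor_le hl]

lemma le_add_mul_of_le_sub_add {a : ℝ} {u : ℕ → ℝ} {k : ℕ → ℕ} {N : ℕ} (ha : 0 ≤ a)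
    (hu : ∀ n, u n ≤ n) (hk : ∀ n, N ≤ n → 0 < k n ∧ k n ≤ n)
    (hstep : ∀ n, N ≤ n → u n ≤ u (n - k n) + a * k n) (n : ℕ) : u n ≤ N + a * n := by
  induction n using Nat.strong_induction_on with
  | _ n ih =>
    rcases lt_or_ge n N with hn | hn
    · have : (n : ℝ) ≤ N := by exact_mod_cast hn.le
      nlinarith [hu n, (n.cast_nonneg : (0 : ℝ) ≤ n)]
    · obtain ⟨hk₀, hkn⟩ := hk n hn
      have ih' := ih (n - k n) (by omega)
      rw [Nat.cast_sub hkn] at ih'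
      linarith [hstep n hn]

lemma tendsto_div_natCast_of_forall_le_add {u : ℕ → ℝ} (hu : ∀ n, 0 ≤ u n)
    (h : ∀ a > 0, ∃ C : ℝ, ∀ n, u n ≤ C + a * n) :
    Tendsto (fun n => u n / n) atTop (𝓝 0) := by
  rw [Metric.tendsto_atTop]
  intro ε hε
  obtain ⟨C, hC⟩ := h (ε / 2) (by positivity)
  obtain ⟨N, hN⟩ := exists_nat_gt (2 * C / ε)
  refine ⟨N + 1, fun n hn => ?_⟩
  have hn₀ : (0 : ℝ) < n := by exact_mod_cast (by omega : 0 < n)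
  have hCn : 2 * C < ε * n := by
    have hNn : (N : ℝ) ≤ n := by exact_mod_cast (by omega : N ≤ n)
    rw [div_lt_iff₀ hε] at hN
    nlinarith
  rw [Real.dist_eq, sub_zero, abs_of_nonneg (div_nonneg (hu n) hn₀.le), div_lt_iff₀ hn₀]
  linarith [hC n]

theorem tendsto_card_filter_Icc_div_of_card_filter_Iseg_le {l : ℕ → ℝ} (h1 : l 1 = 1)
    (hstep : ∀ n, l (n + 1) ≤ l n + 1) (hl : Tendsto l atTop atTop)
    (P : ℕ → Prop) [DecidablePred P]
    (hP : ∀ ε > 0, ∀ᶠ n in atTop, (#((Iseg l n).filter P) : ℝ) ≤ ε * l n) :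
    Tendsto (fun n => (#((Icc 1 n).filter P) : ℝ) / n) atTop (𝓝 0) := by
  refine tendsto_div_natCast_of_forall_le_add (fun n => by positivity) fun a ha => ?_
  obtain ⟨N, hN⟩ := eventually_atTop.mp
    ((hP (a / 2) (by positivity)).and (hl.eventually (eventually_ge_atTop 2)))
  have hcard_le (n : ℕ) : (#((Icc 1 n).filter P) : ℝ) ≤ n := by
    exact_mod_cast (card_filter_le _ _).trans (by simp)
  refine ⟨(N + 1 : ℕ), le_add_mul_of_le_sub_add ha.le hcard_le (k := fun n => ⌊l n⌋₊)
    (fun n hn => ?_) (fun n hn => ?_)⟩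
  · have hl₂ := (hN n (by omega)).2
    exact ⟨Nat.le_floor (by norm_num; linarith),
      Nat.floor_le_of_le (le_natCast_of_succ_le_add_one h1 hstep (by omega))⟩
  · obtain ⟨hwindow, hl₂⟩ := hN n (by omega)
    have hcover : (#((Icc 1 n).filter P) : ℝ) ≤
        #((Icc 1 (n - ⌊l n⌋₊)).filter P) + #((Iseg l n).filter P) := by
      have := card_le_card (filter_subset_filter P (Icc_subset_Icc_union_Iseg l n))
      rw [filter_union] at this
      exact_mod_cast this.trans (card_union_le _ _)
    have hfloor : l n / 2 ≤ ⌊l n⌋₊ := by linarith [Nat.lt_floor_add_one (l n)]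
    linarith [mul_le_mul_of_nonneg_left hfloor ha.le]

theorem stmt18_general (f : ℝ → ℝ)
    (hlim : ∃ p : ℝ, 0 < p ∧ Tendsto (fun u : ℝ => f u / u) atTop (nhds p))
    (l : ℕ → ℝ) (hl : MemLambda l)
    (x : ℕ → ℝ) (L : ℝ) (hconv : FLStatConv f l x L) :
    ∀ ξ : ℝ, 0 < ξ →
      Tendsto (fun n => (((Finset.Icc 1 n).filter (fun t => ξ ≤ |x t - L|)).card : ℝ) / (n : ℝ))
        atTop (nhds 0) := by
  obtain ⟨p, hp, hfp⟩ := hlim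
  obtain ⟨hl1, -, hlstep, -, hltop⟩ := hl
  intro ξ hξ
  refine tendsto_card_filter_Icc_div_of_card_filter_Iseg_le hl1 hlstep hltop _ fun ε hε => ?_
  have hwindow := hconv ξ hξ
  simp only [Real.norm_eq_abs] at hwindow
  exact eventually_le_mul_of_tendsto_apply_div_apply hp hfp hltop hwindow hε

theorem stmt18 (f : ℝ → ℝ) (hf : IsUnboundedModulus f)
    (hlim : ∃ p : ℝ, 0 < p ∧ Tendsto (fun u : ℝ => f u / u) atTop (nhds p))
    (l : ℕ → ℝ) (hl : MemLambda l)
    (hq : ∃ q : ℝ, 0 < q ∧ Tendsto (fun n : ℕ => f (n : ℝ) / f (l n)) atTop (nhds q))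
    (x : ℕ → ℝ) (L : ℝ) (hconv : FLStatConv f l x L) :
    ∀ ξ : ℝ, 0 < ξ →
      Tendsto (fun n => (((Finset.Icc 1 n).filter (fun t => ξ ≤ |x t - L|)).card : ℝ) / (n : ℝ))
        atTop (nhds 0) :=
  stmt18_general f hlim l hl x L hconv
end
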